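/- Let λ ∈ L^∞(Ω) with λ ≥ 0 a.e., h ∈ L^∞(Ω), and u_T ∈ L²(Ω). Let u ∈ V_c solve μ(u,ψ)_V + ∫_Ω λ(u − f)ψ dx = 0 for all ψ ∈ V_c, let z ∈ V_c solve the linearized equation μ(z,ψ)_V + ∫_Ω λ z ψ dx = −∫_Ω h (u − f) ψ dx for all ψ ∈ V_c, and let p ∈ V_c solve the adjoint equation μ(p,φ)_V + ∫_Ω λ p φ dx = −∫_Ω (u − u_T) φ dx for all φ ∈ V_c. Then the reduced gradient identity ∫_Ω (u − u_T) z dx = ∫_Ω (u − f) p h dx holds. -/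

import Mathlib

open MeasureTheory Filter

noncomputable section

/-- Points of `ℝ^d`, with the sup norm. -/
abbrev Rd (d : ℕ) : Type := Fin d → ℝ

/-- The interaction domain `Ω_I` of `Ω` with interaction radius `ε`. -/
def interDom {d : ℕ} (Ω : Set (Rd d)) (ε : ℝ) : Set (Rd d) :=
  {y | y ∉ Ω ∧ ∃ x ∈ Ω, ‖y - x‖ ≤ ε}

/-- The nonlocal bilinear form `(u,v)_V` over `A` with kernel `γ`. -/
def innerV {d : ℕ} (A : Set (Rd d)) (γ : Rd d → Rd d → ℝ) (u v : Rd d → ℝ) : ℝ :=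
  ∫ x in A, ∫ y in A, (u x - u y) * (v x - v y) * γ x y

/-- The constrained space `V_c`: square integrable on `A = Ω̂`, vanishing a.e. on `I = Ω_I`. -/
def Vc {d : ℕ} (A I : Set (Rd d)) : Set (Rd d → ℝ) :=
  {v | MemLp v 2 (volume.restrict A) ∧ ∀ᵐ x ∂volume.restrict I, v x = 0}

/-- The `L²(s)` norm. -/
def L2norm {d : ℕ} (s : Set (Rd d)) (v : Rd d → ℝ) : ℝ :=
  (eLpNorm v 2 (volume.restrict s)).toReal

/-- The `L^∞(s)` norm. -/
def LinfNorm {d : ℕ} (s : Set (Rd d)) (v : Rd d → ℝ) : ℝ :=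
  (eLpNorm v ⊤ (volume.restrict s)).toReal

/-- The nonlocal denoising energy
`E(u) = (μ/2)‖u‖²_V + (1/2)∫_Ω lam (u - f)²`. -/
def energyE {d : ℕ} (A Ω : Set (Rd d)) (γ : Rd d → Rd d → ℝ) (μ : ℝ)
    (lam f u : Rd d → ℝ) : ℝ :=
  μ / 2 * innerV A γ u u + 1 / 2 * ∫ x in Ω, lam x * (u x - f x) ^ 2

theorem innerV_comm {d : ℕ} (A : Set (Rd d)) (γ : Rd d → Rd d → ℝ) (u v : Rd d → ℝ) :
    innerV A γ u v = innerV A γ v u := by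
  simp only [innerV, mul_comm (u _ - u _)]

/-- Test the adjoint equation with `z` and the linearized equation with `p`; the left-hand
sides agree because both forms are symmetric. -/
theorem stmt8_general
    {d : ℕ} (Ω : Set (Rd d)) (ΩI : Set (Rd d)) (Ohat : Set (Rd d)) (γ : Rd d → Rd d → ℝ)
    (μ : ℝ) (f : Rd d → ℝ) (lam : Rd d → ℝ) (h : Rd d → ℝ) (uT : Rd d → ℝ) (u : Rd d → ℝ)
    (z : Rd d → ℝ) (hz : z ∈ Vc Ohat ΩI)
    (hlin : ∀ ψ ∈ Vc Ohat ΩI,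
      μ * innerV Ohat γ z ψ + ∫ x in Ω, lam x * z x * ψ x =
        -∫ x in Ω, h x * (u x - f x) * ψ x)
    (p : Rd d → ℝ) (hp : p ∈ Vc Ohat ΩI)
    (hadj : ∀ φ ∈ Vc Ohat ΩI,
      μ * innerV Ohat γ p φ + ∫ x in Ω, lam x * p x * φ x =
        -∫ x in Ω, (u x - uT x) * φ x) :
    ∫ x in Ω, (u x - uT x) * z x = ∫ x in Ω, (u x - f x) * p x * h x := by
  calc ∫ x in Ω, (u x - uT x) * z x
      = -(μ * innerV Ohat γ p z + ∫ x in Ω, lam x * p x * z x) := by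
        rw [hadj z hz, neg_neg]
    _ = -(μ * innerV Ohat γ z p + ∫ x in Ω, lam x * z x * p x) := by
        simp only [innerV_comm Ohat γ p z, mul_right_comm (lam _)]
    _ = ∫ x in Ω, (u x - f x) * p x * h x := by
        rw [hlin p hp, neg_neg]
        simp only [mul_comm (h _), mul_right_comm _ (h _)]

/-- Reduced gradient identity: `∫_Ω (u − u_T) z = ∫_Ω (u − f) p h`. -/
theorem stmt8
    {d : ℕ} (hd : 1 ≤ d)
    (Ω : Set (Rd d)) (hΩm : MeasurableSet Ω) (hΩb : Bornology.IsBounded Ω)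
    (ε : ℝ) (hε : 0 < ε)
    (ΩI : Set (Rd d)) (hΩI : ΩI = interDom Ω ε)
    (Ohat : Set (Rd d)) (hOhat : Ohat = Ω ∪ ΩI)
    (γ : Rd d → Rd d → ℝ)
    (hγm : Measurable (Function.uncurry γ))
    (hγs : ∀ x y, γ x y = γ y x)
    (hγ0 : ∀ x y, 0 ≤ γ x y)
    (hγc : ∀ x y, ε < ‖x - y‖ → γ x y = 0)
    (c₀ C₀ : ℝ) (hc₀ : 0 < c₀) (hc₀C₀ : c₀ ≤ C₀)
    (hequiv : ∀ v ∈ Vc Ohat ΩI,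
      c₀ * L2norm Ohat v ^ 2 ≤ innerV Ohat γ v v ∧
        innerV Ohat γ v v ≤ C₀ * L2norm Ohat v ^ 2)
    (μ : ℝ) (hμ : 0 < μ)
    (f : Rd d → ℝ) (hf : MemLp f ⊤ (volume.restrict Ω))
    (lam : Rd d → ℝ) (hlamLinf : MemLp lam ⊤ (volume.restrict Ω))
    (hlam0 : ∀ᵐ x ∂volume.restrict Ω, 0 ≤ lam x)
    (h : Rd d → ℝ) (hh : MemLp h ⊤ (volume.restrict Ω))
    (uT : Rd d → ℝ) (huT : MemLp uT 2 (volume.restrict Ω))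
    (u : Rd d → ℝ) (hu : u ∈ Vc Ohat ΩI)
    (hstate : ∀ ψ ∈ Vc Ohat ΩI,
      μ * innerV Ohat γ u ψ + ∫ x in Ω, lam x * (u x - f x) * ψ x = 0)
    (z : Rd d → ℝ) (hz : z ∈ Vc Ohat ΩI)
    (hlin : ∀ ψ ∈ Vc Ohat ΩI,
      μ * innerV Ohat γ z ψ + ∫ x in Ω, lam x * z x * ψ x =
        -∫ x in Ω, h x * (u x - f x) * ψ x)
    (p : Rd d → ℝ) (hp : p ∈ Vc Ohat ΩI)
    (hadj : ∀ φ ∈ Vc Ohat ΩI,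
      μ * innerV Ohat γ p φ + ∫ x in Ω, lam x * p x * φ x =
        -∫ x in Ω, (u x - uT x) * φ x) :
    ∫ x in Ω, (u x - uT x) * z x = ∫ x in Ω, (u x - f x) * p x * h x :=
  stmt8_general Ω ΩI Ohat γ μ f lam h uT u z hz hlin p hp hadj
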